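/- Let s_0(j) = j and, for i > 0, s_i(j) = 3·(s_{i-1}(j))^4 + 4·(s_{i-1}(j))^3. Then for all natural numbers i and j: if j is even, then s_i(j) = c · 2^(2^i) for some natural number c, and if j is odd, then s_i(j) = d · 2^(2^i) − 1 for some natural number d (equivalently, 2^(2^i) divides s_i(j) when j is even, and 2^(2^i) divides s_i(j) + 1 when j is odd). -/
import Mathlib


/-- Binary strings over the alphabet {0,1}. -/
abbrev BitString := List Bool

/-- A fixed injective polynomial-time pairing function ⟨x,y⟩ on strings. -/
def bpair (x y : BitString) : BitString :=
  (x.map fun b => [b, b]).flatten ++ [true, false] ++ y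

/-- The tally string 1^n. -/
def ones (n : ℕ) : BitString := List.replicate n true

/-- The Toda polynomials: `s_0(j) = j`, `s_i(j) = 3·s_{i-1}(j)^4 + 4·s_{i-1}(j)^3`. -/
def toda : ℕ → ℕ → ℕ
  | 0, j => j
  | i + 1, j => 3 * (toda i j) ^ 4 + 4 * (toda i j) ^ 3

/-- For all `i, j`: if `j` is even then `s_i(j) = c · 2^{2^i}` for some `c`, and if `j` is odd
then `s_i(j) = d · 2^{2^i} − 1` for some `d` (stated as `s_i(j) + 1 = d · 2^{2^i}` to avoid
truncated subtraction); equivalently, `2^{2^i} ∣ s_i(j)` when `j` is even and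
`2^{2^i} ∣ s_i(j) + 1` when `j` is odd. -/
theorem toda_polynomials_mod_power
    (i j : ℕ) :
    (Even j → ∃ c : ℕ, toda i j = c * 2 ^ (2 ^ i)) ∧
    (Odd j → ∃ d : ℕ, toda i j + 1 = d * 2 ^ (2 ^ i)) := by
  induction i with
  | zero =>
    constructor
    · rintro ⟨k, hk⟩
      exact ⟨k, by simp [toda, hk]; ring⟩
    · rintro ⟨k, hk⟩
      exact ⟨k + 1, by simp [toda, hk]; ring⟩
  | succ i ih =>
    have hpow : (2 : ℕ) ^ (2 ^ (i + 1)) = (2 ^ (2 ^ i)) ^ 2 := by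
      rw [pow_succ, pow_mul]
    constructor
    · intro hj
      obtain ⟨c, hc⟩ := ih.1 hj
      refine ⟨(3 * (toda i j) ^ 2 + 4 * (toda i j)) * c ^ 2, ?_⟩
      show 3 * (toda i j) ^ 4 + 4 * (toda i j) ^ 3 = _
      rw [hpow, hc]; ring
    · intro hj
      obtain ⟨d, hd⟩ := ih.2 hj
      set x := toda i j with hx
      have hle : 2 * x ≤ 3 * x ^ 2 + 1 := by nlinarith
      refine ⟨d ^ 2 * (3 * x ^ 2 + 1 - 2 * x), ?_⟩
      have key : toda (i + 1) j + 1 = (x + 1) ^ 2 * (3 * x ^ 2 + 1 - 2 * x) := by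
        show 3 * x ^ 4 + 4 * x ^ 3 + 1 = _
        zify [hle]; ring
      rw [key, hd, hpow]; ring
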